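/- arXiv:2207.12493 — 5 statements merged into one kernel-verified Lean document; each statement's English description precedes it below -/
import Mathlib

section
/- Let n ≥ 6 be even. There exist c > 0 and L₀ ≥ 1 such that for all real L ≥ L₀, the number of monic polynomials f ∈ ℤ[X] of degree n, all of whose coefficients have absolute value at most L, having n distinct complex roots r₁,…,r_n and satisfying ∏_{1≤i<j≤n}(r_i − r_j)² = q² for some nonzero rational number q (that is, the discriminant of f is a nonzero rational square), is at least c·L^((n−1)/2). -/
/-!
If `g` is monic of degree `d` with distinct nonzero roots `sᵢ`, then `f = g(X²)` has the `2d`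
distinct roots `±√sᵢ`, and `∏_{i<j} (rᵢ - rⱼ)² = 4ᵈ (∏ sᵢ) Res(g, g')²`. When the constant term of
`g` is `(-1)ᵈ t²` we get `∏ sᵢ = t²`, so the discriminant of `f` is the square of the integer
`2ᵈ t Res(g, g')`. Taking `g = Xᵈ + a_{d-1} X^{d-1} + ⋯ + a₁ X + (-1)ᵈ t²` with `|aᵢ| ≤ L` and
`1 ≤ t ≤ √L` gives about `L^{d-1} √L = L^{(n-1)/2}` such `f`, where `n = 2d`. For fixed `aᵢ`, `g`
fails to be separable for at most `d - 1` values of `t`, since `-(-1)ᵈ t²` must then be a critical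
value of `g - g(0)`.
-/

open Polynomial Finset Lagrange

section RootProducts

variable {R : Type*} [CommRing R]

theorem prod_ne_eq_prod_lt_mul_swap {α M : Type*} [Fintype α] [LinearOrder α] [CommMonoid M]
    (f : α → α → M) :
    ∏ p ∈ univ.filter (fun p : α × α => p.1 ≠ p.2), f p.1 p.2 =
      ∏ p ∈ univ.filter (fun p : α × α => p.1 < p.2), f p.1 p.2 * f p.2 p.1 := by
  have hsplit : univ.filter (fun p : α × α => p.1 ≠ p.2) =
      univ.filter (fun p : α × α => p.1 < p.2) ∪ univ.filter (fun p : α × α => p.2 < p.1) := by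
    ext p; simp [lt_or_lt_iff_ne]
  have hdisj : Disjoint (univ.filter (fun p : α × α => p.1 < p.2))
      (univ.filter (fun p : α × α => p.2 < p.1)) :=
    disjoint_filter.mpr fun _ _ h => h.asymm
  rw [hsplit, prod_union hdisj, prod_mul_distrib]
  congr 1
  exact prod_equiv (Equiv.prodComm α α) (by simp) (by simp)

theorem prod_filter_lt_sub_sq_eq_prod_eval_derivative {α : Type*} [Fintype α] [LinearOrder α]
    (r : α → R) :
    ∏ p ∈ univ.filter (fun p : α × α => p.1 < p.2), (r p.1 - r p.2) ^ 2 =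
      (-1) ^ (Fintype.card α).choose 2 * ∏ i, (derivative (nodal univ r)).eval (r i) := by
  have hcard : #(univ.filter (fun p : α × α => p.1 < p.2)) = (Fintype.card α).choose 2 := by
    rw [← card_univ, ← card_product_filter_lt, univ_product_univ]
  have hoff : ∏ i, (derivative (nodal univ r)).eval (r i) =
      (-1) ^ (Fintype.card α).choose 2 *
        ∏ p ∈ univ.filter (fun p : α × α => p.1 < p.2), (r p.1 - r p.2) ^ 2 := calc
    _ = ∏ i, ∏ j ∈ univ.erase i, (r i - r j) := by
      simp_rw [eval_nodal_derivative_eval_node_eq (mem_univ _), eval_nodal]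
    _ = ∏ p ∈ univ.filter (fun p : α × α => p.1 ≠ p.2), (r p.1 - r p.2) := by
      rw [prod_filter, Fintype.prod_prod_type]
      refine prod_congr rfl fun i _ => ?_
      rw [← prod_filter, filter_ne]
    _ = ∏ p ∈ univ.filter (fun p : α × α => p.1 < p.2), (-1) * (r p.1 - r p.2) ^ 2 :=
      (prod_ne_eq_prod_lt_mul_swap fun a b => r a - r b).trans (prod_congr rfl fun _ _ => by ring)
    _ = _ := by rw [prod_mul_distrib, prod_const, hcard]
  rw [hoff, ← mul_assoc, ← pow_add, Even.neg_one_pow ⟨_, rfl⟩, one_mul]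

end RootProducts

theorem even_choose_two_add_add_self (d : ℕ) : Even ((d + d).choose 2 + d) := by
  have hsucc (n : ℕ) : (n + 1).choose 2 = n.choose 2 + n := by
    rw [Nat.choose_succ_succ', Nat.choose_one_right, add_comm]
  induction d with
  | zero => simp
  | succ d ih =>
    rw [show d + 1 + (d + 1) = d + d + 1 + 1 by ring, hsucc, hsucc]
    obtain ⟨k, hk⟩ := ih
    exact ⟨k + 2 * d + 1, by omega⟩

section SquareRoots

variable {R : Type*} [CommRing R] {m : ℕ} (ρ : Fin m → R)

theorem expand_nodal_sq :
    expand R 2 (nodal univ fun i => ρ i ^ 2) = nodal univ (Fin.append ρ (-ρ)) := by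
  simp only [nodal, map_prod, map_sub, expand_X, expand_C, Fin.prod_univ_add, Fin.append_left,
    Fin.append_right, Pi.neg_apply, ← prod_mul_distrib, map_neg, map_pow]
  exact prod_congr rfl fun _ _ => by ring

theorem prod_eval_derivative_nodal_append :
    ∏ k, (derivative (nodal univ (Fin.append ρ (-ρ)))).eval (Fin.append ρ (-ρ) k) =
      (-4) ^ m * (∏ i, ρ i ^ 2) *
        (∏ i, (derivative (nodal univ fun i => ρ i ^ 2)).eval (ρ i ^ 2)) ^ 2 := by
  simp only [← expand_nodal_sq, derivative_expand, eval_mul, expand_eval, Fin.prod_univ_add,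
    Fin.append_left, Fin.append_right, Pi.neg_apply, eval_natCast, eval_pow, eval_X]
  rw [← Fin.prod_const m (-4 : R), ← prod_pow]
  simp only [← prod_mul_distrib]
  exact prod_congr rfl fun _ _ => by norm_num; ring

theorem append_neg_injective [NoZeroDivisors R] [NeZero (2 : R)]
    (hsq : Function.Injective fun i => ρ i ^ 2) (hρ : ∀ i, ρ i ≠ 0) :
    Function.Injective (Fin.append ρ (-ρ)) := by
  have hne : ∀ i j, ρ i ≠ -ρ j := by
    intro i j h
    obtain rfl : i = j := hsq (by simp [h])
    have h2 : (2 : R) * ρ i = 0 := by linear_combination h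
    exact hρ i ((mul_eq_zero.mp h2).resolve_left two_ne_zero)
  intro x y hxy
  induction x using Fin.addCases <;> induction y using Fin.addCases <;>
    simp only [Fin.append_left, Fin.append_right, Pi.neg_apply, neg_inj] at hxy
  · exact congrArg _ (hsq (congrArg (· ^ 2) hxy))
  · exact absurd hxy (hne _ _)
  · exact absurd hxy.symm (hne _ _)
  · exact congrArg _ (hsq (congrArg (· ^ 2) hxy))

end SquareRoots

section Roots

variable {K : Type*} [Field K]

theorem roots_nodal {ι : Type*} [Fintype ι] (s : ι → K) :
    (nodal univ s).roots = univ.val.map s := by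
  have h := roots_multiset_prod_X_sub_C (univ.val.map s)
  rwa [Multiset.map_map] at h

theorem prod_eval_derivative_nodal_eq_resultant {ι S : Type*} [Fintype ι] [CommRing S]
    (φ : S →+* K) (g : S[X]) (s : ι → K) (hg : g.map φ = nodal univ s) :
    ∏ i, (derivative (nodal univ s)).eval (s i) =
      φ (resultant g (derivative g) (Fintype.card ι) (Fintype.card ι - 1)) := by
  have hsplit : (nodal univ s).Splits := Splits.prod fun i _ => Splits.X_sub_C (s i)
  have hdeg : (nodal univ s).natDegree = Fintype.card ι := by rw [natDegree_nodal, card_univ]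
  rw [← resultant_map_map, ← derivative_map, hg, ← hdeg,
    resultant_eq_prod_eval _ _ _ ((natDegree_derivative_le _).trans_eq (by rw [hdeg])) hsplit,
    nodal_monic.leadingCoeff, one_pow, one_mul, roots_nodal, Multiset.map_map]
  rfl

theorem exists_injective_nodal_eq_of_separable [IsAlgClosed K] {G : K[X]} {d : ℕ} (hG : G.Monic)
    (hd : G.natDegree = d) (hsep : G.Separable) :
    ∃ s : Fin d → K, Function.Injective s ∧ G = nodal univ s := by
  classical
  have hnodup : G.roots.Nodup := nodup_roots hsep
  have hcard : #G.roots.toFinset = d := by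
    rw [Multiset.toFinset_card_of_nodup hnodup, IsAlgClosed.card_roots_eq_natDegree, hd]
  let e := G.roots.toFinset.equivFin.trans (finCongr hcard)
  refine ⟨fun i => e.symm i, Subtype.val_injective.comp e.symm.injective, ?_⟩
  conv_lhs => rw [(IsAlgClosed.splits G).eq_prod_roots_of_monic hG]
  rw [nodal, e.symm.prod_comp (fun x : G.roots.toFinset => X - C (x : K)),
    prod_coe_sort (f := fun x => X - C x), prod_eq_multiset_prod, Multiset.toFinset_val,
    Multiset.dedup_eq_self.mpr hnodup]

theorem exists_roots_expand_two [IsAlgClosed K] [NeZero (2 : K)] {S : Type*} [CommRing S]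
    (φ : S →+* K) {g : S[X]} {d : ℕ} (hg : g.Monic) (hd : g.natDegree = d)
    (hsep : (g.map φ).Separable) (h0 : φ (g.coeff 0) ≠ 0) :
    ∃ r : Fin (d + d) → K, Function.Injective r ∧ (expand S 2 g).map φ = ∏ i, (X - C (r i)) ∧
      ∏ p ∈ univ.filter (fun p : Fin (d + d) × Fin (d + d) => p.1 < p.2), (r p.1 - r p.2) ^ 2 =
        4 ^ d * ((-1) ^ d * φ (g.coeff 0)) * φ (resultant g (derivative g) d (d - 1)) ^ 2 := by
  obtain ⟨s, hs, hgs⟩ := exists_injective_nodal_eq_of_separable (hg.map φ)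
    (by rw [hg.natDegree_map, hd]) hsep
  choose ρ hρ using fun i => IsAlgClosed.exists_pow_nat_eq (s i) two_pos
  obtain rfl : (fun i => ρ i ^ 2) = s := funext hρ
  have heval0 : φ (g.coeff 0) = (-1) ^ d * ∏ i, ρ i ^ 2 := by
    rw [← coeff_map, coeff_zero_eq_eval_zero, hgs, eval_nodal, ← Fin.prod_const d (-1 : K),
      ← prod_mul_distrib]
    simp
  have hρ0 : ∀ i, ρ i ≠ 0 := by
    intro i hi
    have := eval_nodal_at_node (s := univ) (v := fun i => ρ i ^ 2) (mem_univ i)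
    rw [← hgs, hi, zero_pow two_ne_zero, ← coeff_zero_eq_eval_zero, coeff_map] at this
    exact h0 this
  refine ⟨Fin.append ρ (-ρ), append_neg_injective ρ hs hρ0, ?_, ?_⟩
  · rw [map_expand, hgs, expand_nodal_sq]
    rfl
  · rw [prod_filter_lt_sub_sq_eq_prod_eval_derivative, prod_eval_derivative_nodal_append,
      prod_eval_derivative_nodal_eq_resultant φ g _ hgs, heval0, Fintype.card_fin, Fintype.card_fin]
    have hsign : (-1 : K) ^ (d + d).choose 2 * (-1) ^ d = 1 := by
      rw [← pow_add, (even_choose_two_add_add_self d).neg_one_pow]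
    have hsq : (-1 : K) ^ d * (-1) ^ d = 1 := by rw [← pow_add, Even.neg_one_pow ⟨d, rfl⟩]
    rw [show (-4 : K) ^ d = (-1) ^ d * 4 ^ d from neg_pow _ _]
    linear_combination (4 ^ d * (∏ i, ρ i ^ 2) * φ (resultant g (derivative g) d (d - 1)) ^ 2) *
      (hsign - hsq)

end Roots

section CommonRoot

variable {K : Type*} [Field K] [IsAlgClosed K]

theorem exists_isRoot_derivative_of_not_separable {f : K[X]} (hf : ¬ f.Separable) :
    ∃ z, f.IsRoot z ∧ (derivative f).IsRoot z := by
  rw [separable_def, isCoprime_iff_aeval_ne_zero_of_isAlgClosed K K] at hf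
  simp only [not_forall, not_or, not_not] at hf
  obtain ⟨z, hz, hz'⟩ := hf
  exact ⟨z, by simpa [aeval_def] using hz, by simpa [aeval_def] using hz'⟩

theorem card_filter_not_separable_add_C_le {ι : Type*} (H : K[X]) (hH : derivative H ≠ 0)
    (s : Finset ι) (c : ι → K) (hc : Set.InjOn c s)
    [DecidablePred fun i => (H + C (c i)).Separable] :
    #(s.filter fun i => ¬ (H + C (c i)).Separable) ≤ H.natDegree - 1 := by
  classical
  calc #(s.filter fun i => ¬ (H + C (c i)).Separable)
      ≤ #((derivative H).roots.toFinset.image fun z => -H.eval z) := by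
        refine card_le_card_of_injOn c (fun i hi => ?_) (hc.mono (filter_subset _ _))
        obtain ⟨z, hz, hz'⟩ := exists_isRoot_derivative_of_not_separable (mem_filter.mp hi).2
        rw [derivative_add, derivative_C, add_zero] at hz'
        refine mem_image.mpr ⟨z, Multiset.mem_toFinset.mpr ((mem_roots hH).mpr hz'), ?_⟩
        simp only [IsRoot, eval_add, eval_C] at hz
        linear_combination -hz
    _ ≤ #(derivative H).roots.toFinset := card_image_le
    _ ≤ Multiset.card (derivative H).roots := Multiset.toFinset_card_le _
    _ ≤ (derivative H).natDegree := card_roots' _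
    _ ≤ H.natDegree - 1 := natDegree_derivative_le H

end CommonRoot

theorem card_mul_sub_le_card_filter_product {α β : Type*} (A : Finset α) (T : Finset β)
    (P : α → β → Prop) [∀ a b, Decidable (P a b)] (k : ℕ)
    (hP : ∀ a ∈ A, #(T.filter fun b => ¬ P a b) ≤ k) :
    #A * (#T - k) ≤ #((A ×ˢ T).filter fun p => P p.1 p.2) := by
  calc #A * (#T - k) = ∑ _a ∈ A, (#T - k) := by rw [sum_const, smul_eq_mul]
    _ ≤ ∑ a ∈ A, #(T.filter (P a)) := sum_le_sum fun a ha => by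
        have := card_filter_add_card_filter_not (s := T) (P a)
        have := hP a ha
        omega
    _ = #((A ×ˢ T).filter fun p => P p.1 p.2) := by
        simp only [card_filter, sum_product]

theorem finite_setOf_natDegree_le_abs_coeff_le (n : ℕ) (L : ℝ) :
    {f : ℤ[X] | f.natDegree ≤ n ∧ ∀ i, |(f.coeff i : ℝ)| ≤ L}.Finite := by
  have hbox : (Set.univ.pi fun _ : Fin (n + 1) => Set.Icc (-⌈L⌉) ⌈L⌉).Finite :=
    Set.Finite.pi fun _ => Set.finite_Icc _ _
  refine (hbox.image (ofFn (n + 1))).subset fun f ⟨hdeg, hf⟩ =>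
    ⟨toFn (n + 1) f, fun i _ => ?_, ofFn_comp_toFn_eq_id_of_natDegree_lt (by omega)⟩
  have h := abs_le.mp (hf i)
  have h1 : (-⌈L⌉ : ℝ) ≤ f.coeff i := by linarith [Int.le_ceil L]
  have h2 : (f.coeff i : ℝ) ≤ ⌈L⌉ := h.2.trans (Int.le_ceil L)
  exact ⟨by exact_mod_cast h1, by exact_mod_cast h2⟩

theorem le_card_Icc_neg_floor {L : ℝ} (hL : 0 ≤ L) : L ≤ #(Icc (-⌊L⌋) ⌊L⌋) := by
  have h0 : 0 ≤ ⌊L⌋ := Int.floor_nonneg.mpr hL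
  have hcard : (#(Icc (-⌊L⌋) ⌊L⌋) : ℝ) = ((⌊L⌋ + 1 - -⌊L⌋ : ℤ) : ℝ) := by
    exact_mod_cast Int.card_Icc_of_le (-⌊L⌋) ⌊L⌋ (by omega)
  rw [hcard]
  push_cast
  linarith [Int.lt_floor_add_one L, (Int.cast_nonneg (R := ℝ) h0)]

theorem sub_one_le_card_Icc_one_floor {x : ℝ} (hx : 0 ≤ x) : x - 1 ≤ #(Icc 1 ⌊x⌋) := by
  have h0 : 0 ≤ ⌊x⌋ := Int.floor_nonneg.mpr hx
  have hcard : (#(Icc 1 ⌊x⌋) : ℝ) = ((⌊x⌋ + 1 - 1 : ℤ) : ℝ) := by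
    exact_mod_cast Int.card_Icc_of_le 1 ⌊x⌋ (by omega)
  rw [hcard]
  push_cast
  linarith [Int.lt_floor_add_one x]

section MonicOfFn

variable {R : Type*} [CommRing R] [DecidableEq R] {k : ℕ}

noncomputable def monicOfFn (a : Fin k → R) (c : R) : R[X] := X ^ (k + 1) + (X * ofFn k a + C c)

theorem degree_X_mul_ofFn_add_C_lt (a : Fin k → R) (c : R) :
    (X * ofFn k a + C c).degree < ↑(k + 1) := by
  rw [degree_lt_iff_coeff_zero]
  rintro (_ | j) hj
  · omega
  · simp [coeff_X_mul, ofFn_coeff_eq_zero_of_ge a (by omega : k ≤ j)]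

theorem monicOfFn_monic (a : Fin k → R) (c : R) : (monicOfFn a c).Monic :=
  monic_X_pow_add (degree_X_mul_ofFn_add_C_lt a c)

theorem natDegree_monicOfFn [Nontrivial R] (a : Fin k → R) (c : R) :
    (monicOfFn a c).natDegree = k + 1 := by
  rw [monicOfFn, natDegree_add_eq_left_of_degree_lt, natDegree_X_pow]
  rw [degree_X_pow]
  exact degree_X_mul_ofFn_add_C_lt a c

theorem coeff_monicOfFn_zero (a : Fin k → R) (c : R) : (monicOfFn a c).coeff 0 = c := by
  simp [monicOfFn, coeff_X_pow]

theorem monicOfFn_eq_add_C (a : Fin k → R) (c : R) : monicOfFn a c = monicOfFn a 0 + C c := by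
  simp only [monicOfFn, map_zero, add_zero, add_assoc]

theorem monicOfFn_injective2 : Function.Injective2 (monicOfFn (R := R) (k := k)) := by
  intro a a' c c' h
  have hc : c = c' := by simpa only [coeff_monicOfFn_zero] using congrArg (coeff · 0) h
  subst hc
  refine ⟨injective_ofFn k (isRegular_X.left ?_), rfl⟩
  simpa only [monicOfFn, add_left_cancel_iff, add_right_cancel_iff] using h

theorem coeff_monicOfFn_mem (a : Fin k → R) (c : R) (j : ℕ) :
    (monicOfFn a c).coeff j ∈ ({0, 1, c} ∪ Set.range a : Set R) := by
  rcases j with _ | j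
  · simp [coeff_monicOfFn_zero]
  · simp only [monicOfFn, coeff_add, coeff_X_pow, coeff_X_mul, coeff_C_succ, add_zero,
      Nat.succ_inj]
    rcases lt_trichotomy j k with hj | rfl | hj
    · simp [hj.ne, ofFn_coeff_eq_val_of_lt a hj]
    · simp [ofFn_coeff_eq_zero_of_ge a le_rfl]
    · simp [hj.ne', ofFn_coeff_eq_zero_of_ge a hj.le]

end MonicOfFn

theorem neg_one_pow_mul_sq_injOn (j : ℕ) :
    Set.InjOn (fun t : ℤ => (-1) ^ j * t ^ 2) (Set.Ici 0) := by
  intro t ht t' ht' h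
  have hsq : t ^ 2 = t' ^ 2 := mul_left_cancel₀ (pow_ne_zero j (by norm_num)) h
  exact (sq_eq_sq₀ ht ht').mp hsq

def squareDiscPolys (n : ℕ) (L : ℝ) : Set ℤ[X] :=
  {f : ℤ[X] | f.Monic ∧ f.natDegree = n ∧ (∀ i, |(f.coeff i : ℝ)| ≤ L) ∧
    ∃ r : Fin n → ℂ, Function.Injective r ∧
      f.map (algebraMap ℤ ℂ) = ∏ i, (X - C (r i)) ∧
      ∃ q : ℚ, q ≠ 0 ∧
        (∏ p ∈ Finset.univ.filter (fun p : Fin n × Fin n => p.1 < p.2),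
          (r p.1 - r p.2) ^ 2) = (q : ℂ) ^ 2}

theorem squareDiscPolys_finite (n : ℕ) (L : ℝ) : (squareDiscPolys n L).Finite :=
  (finite_setOf_natDegree_le_abs_coeff_le n L).subset fun _ hf => ⟨hf.2.1.le, hf.2.2.1⟩

theorem expand_monicOfFn_mem_squareDiscPolys {k : ℕ} {L : ℝ} (hL : 1 ≤ L) {a : Fin k → ℤ}
    (ha : ∀ i, |(a i : ℝ)| ≤ L) {t : ℤ} (ht : t ≠ 0) (htL : (t : ℝ) ^ 2 ≤ L)
    (hsep : ((monicOfFn a ((-1) ^ (k + 1) * t ^ 2)).map (algebraMap ℤ ℂ)).Separable) :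
    expand ℤ 2 (monicOfFn a ((-1) ^ (k + 1) * t ^ 2)) ∈ squareDiscPolys (k + 1 + (k + 1)) L := by
  set g := monicOfFn a ((-1) ^ (k + 1) * t ^ 2)
  have hg : g.Monic := monicOfFn_monic a _
  have hg0 : g.coeff 0 = (-1) ^ (k + 1) * t ^ 2 := coeff_monicOfFn_zero a _
  have h0 : algebraMap ℤ ℂ (g.coeff 0) ≠ 0 := by simp [hg0, ht]
  obtain ⟨r, hr, hmap, hdisc⟩ :=
    exists_roots_expand_two (algebraMap ℤ ℂ) hg (natDegree_monicOfFn a _) hsep h0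
  simp only [Nat.add_sub_cancel, algebraMap_int_eq, eq_intCast, hg0] at hdisc
  have hdisc_ne : ∏ p ∈ univ.filter (fun p : Fin (k + 1 + (k + 1)) × _ => p.1 < p.2),
      (r p.1 - r p.2) ^ 2 ≠ 0 :=
    prod_ne_zero_iff.mpr fun p hp =>
      pow_ne_zero _ (sub_ne_zero.mpr (hr.ne (mem_filter.mp hp).2.ne))
  set q : ℚ := 2 ^ (k + 1) * t * resultant g (derivative g) (k + 1) k
  have hq : ∏ p ∈ univ.filter (fun p : Fin (k + 1 + (k + 1)) × _ => p.1 < p.2),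
      (r p.1 - r p.2) ^ 2 = (q : ℂ) ^ 2 := by
    have hsign : ((-1 : ℂ) ^ (k + 1)) ^ 2 = 1 := by
      rw [← pow_mul, Even.neg_one_pow ⟨k + 1, by ring⟩]
    have hpow : ((2 : ℂ) ^ (k + 1)) ^ 2 = 4 ^ (k + 1) := by
      rw [← pow_mul, mul_comm, pow_mul]; norm_num
    rw [hdisc]
    push_cast [q]
    linear_combination (4 ^ (k + 1) * (t : ℂ) ^ 2 *
      ((resultant g (derivative g) (k + 1) k : ℤ) : ℂ) ^ 2) * hsign -
      ((t : ℂ) ^ 2 * ((resultant g (derivative g) (k + 1) k : ℤ) : ℂ) ^ 2) * hpow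
  refine ⟨hg.expand two_pos, by rw [natDegree_expand, natDegree_monicOfFn]; ring, fun j => ?_,
    r, hr, hmap, q, fun h => hdisc_ne (by rw [hq, h]; simp), hq⟩
  rw [coeff_expand two_pos]
  split_ifs
  · have hmem : g.coeff (j / 2) ∈ ({0, 1, (-1) ^ (k + 1) * t ^ 2} ∪ Set.range a : Set ℤ) :=
      coeff_monicOfFn_mem a _ _
    rcases hmem with (h | h | h) | ⟨i, h⟩
    · simp [h]; linarith
    · simp [h]; linarith
    · rw [h]; simpa [abs_mul] using htL
    · rw [← h]; exact ha i
  · simp; linarith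

open scoped Classical in
theorem card_filter_separable_le_ncard_squareDiscPolys (k : ℕ) {L : ℝ} (hL : 1 ≤ L) :
    #(((Fintype.piFinset fun _ : Fin k => Icc (-⌊L⌋) ⌊L⌋) ×ˢ Icc 1 ⌊√L⌋).filter fun p =>
      ((monicOfFn p.1 ((-1) ^ (k + 1) * p.2 ^ 2)).map (algebraMap ℤ ℂ)).Separable) ≤
      (squareDiscPolys (k + 1 + (k + 1)) L).ncard := by
  rw [← Set.ncard_coe_finset]
  refine le_of_eq_of_le (Set.InjOn.ncard_image (f := fun p : (Fin k → ℤ) × ℤ =>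
    expand ℤ 2 (monicOfFn p.1 ((-1) ^ (k + 1) * p.2 ^ 2))) ?_).symm
    (Set.ncard_le_ncard ?_ (squareDiscPolys_finite _ _))
  · intro p hp p' hp' h
    simp only [coe_filter, mem_product, Fintype.mem_piFinset, mem_Icc, Set.mem_ofPred_eq] at hp hp'
    obtain ⟨ha, hc⟩ := monicOfFn_injective2 (expand_injective two_pos h)
    exact Prod.ext ha (neg_one_pow_mul_sq_injOn (k + 1) (by simp; omega) (by simp; omega) hc)
  · rintro _ ⟨⟨a, t⟩, hp, rfl⟩
    simp only [coe_filter, mem_product, Fintype.mem_piFinset, mem_Icc, Set.mem_ofPred_eq] at hp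
    obtain ⟨⟨ha, ht1, ht⟩, hsep⟩ := hp
    refine expand_monicOfFn_mem_squareDiscPolys hL (fun i => ?_) (by omega) ?_ hsep
    · rw [abs_le]
      constructor
      · have : ((-⌊L⌋ : ℤ) : ℝ) ≤ a i := by exact_mod_cast (ha i).1
        push_cast at this
        linarith [Int.floor_le L]
      · exact (Int.cast_le.mpr (ha i).2).trans (Int.floor_le L)
    · have h1 : (1 : ℝ) ≤ t := by exact_mod_cast ht1
      have h2 : (t : ℝ) ≤ √L := (Int.cast_le.mpr ht).trans (Int.floor_le _)
      calc (t : ℝ) ^ 2 ≤ √L ^ 2 := by gcongr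
        _ = L := Real.sq_sqrt (by linarith)

open scoped Classical in
theorem card_filter_not_separable_monicOfFn_le (k : ℕ) (a : Fin k → ℤ) (T : Finset ℤ)
    (hT : ∀ t ∈ T, 0 ≤ t) :
    #(T.filter fun t => ¬((monicOfFn a ((-1) ^ (k + 1) * t ^ 2)).map (algebraMap ℤ ℂ)).Separable)
      ≤ k := by
  set H := (monicOfFn a 0).map (algebraMap ℤ ℂ)
  have hH : H.natDegree = k + 1 := by
    rw [(monicOfFn_monic a 0).natDegree_map, natDegree_monicOfFn]
  have hinj : Set.InjOn (fun t : ℤ => (((-1) ^ (k + 1) * t ^ 2 : ℤ) : ℂ)) T :=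
    Int.cast_injective.comp_injOn ((neg_one_pow_mul_sq_injOn (k + 1)).mono fun t ht => hT t ht)
  have := card_filter_not_separable_add_C_le H (derivative_ne_zero.mpr (by omega)) T _ hinj
  rw [hH, Nat.add_sub_cancel] at this
  refine le_of_eq_of_le (congrArg card (filter_congr fun t _ => ?_)) this
  rw [monicOfFn_eq_add_C a, Polynomial.map_add, map_C, eq_intCast]

theorem pow_mul_sqrt_div_two_le_card_mul_sub (k : ℕ) {L : ℝ} (hL : (2 * k + 2) ^ 2 ≤ L) :
    L ^ k * (√L / 2) ≤
      #(Fintype.piFinset fun _ : Fin k => Icc (-⌊L⌋) ⌊L⌋) * ((#(Icc 1 ⌊√L⌋) - k : ℕ) : ℝ) := by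
  have hL0 : 0 ≤ L := le_trans (by positivity) hL
  have hsqrt : 2 * k + 2 ≤ √L := Real.le_sqrt_of_sq_le hL
  have hA : L ^ k ≤ #(Fintype.piFinset fun _ : Fin k => Icc (-⌊L⌋) ⌊L⌋) := by
    rw [Fintype.card_piFinset, prod_const, card_univ, Fintype.card_fin, Nat.cast_pow]
    exact pow_le_pow_left₀ hL0 (le_card_Icc_neg_floor hL0) k
  have hT := sub_one_le_card_Icc_one_floor (Real.sqrt_nonneg L)
  rw [Nat.cast_sub (by exact_mod_cast (by linarith : (k : ℝ) ≤ #(Icc 1 ⌊√L⌋)))]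
  gcongr
  linarith

theorem disc_square_lower_bound (n : ℕ) (hn : 6 ≤ n) (heven : Even n) :
    ∃ c > (0 : ℝ), ∃ L₀ : ℝ, 1 ≤ L₀ ∧ ∀ L : ℝ, L₀ ≤ L →
      c * L ^ (((n : ℝ) - 1) / 2) ≤
        ({f : ℤ[X] | f.Monic ∧ f.natDegree = n ∧ (∀ i, |(f.coeff i : ℝ)| ≤ L) ∧
            ∃ r : Fin n → ℂ, Function.Injective r ∧
              f.map (algebraMap ℤ ℂ) = ∏ i, (X - C (r i)) ∧
              ∃ q : ℚ, q ≠ 0 ∧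
                (∏ p ∈ Finset.univ.filter (fun p : Fin n × Fin n => p.1 < p.2),
                  (r p.1 - r p.2) ^ 2) = (q : ℂ) ^ 2}.ncard : ℝ) := by
  classical
  obtain ⟨m, rfl⟩ := heven
  obtain ⟨k, rfl⟩ : ∃ k, m = k + 1 := ⟨m - 1, by omega⟩
  have hk : (1 : ℝ) ≤ (2 * k + 2) ^ 2 := by nlinarith [k.cast_nonneg (α := ℝ)]
  refine ⟨1 / 2, by norm_num, (2 * k + 2) ^ 2, hk, fun L hL => ?_⟩
  have hcount := card_mul_sub_le_card_filter_product
    (Fintype.piFinset fun _ : Fin k => Icc (-⌊L⌋) ⌊L⌋) (Icc 1 ⌊√L⌋) _ k fun a _ =>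
    card_filter_not_separable_monicOfFn_le k a _ fun t ht => by linarith [(mem_Icc.mp ht).1]
  have hexp : L ^ ((((k + 1 + (k + 1) : ℕ) : ℝ) - 1) / 2) = L ^ k * √L := by
    rw [Real.sqrt_eq_rpow, ← Real.rpow_natCast,
      ← Real.rpow_add' (by linarith) (by positivity)]
    push_cast
    ring_nf
  change _ ≤ ((squareDiscPolys _ L).ncard : ℝ)
  calc 1 / 2 * L ^ ((((k + 1 + (k + 1) : ℕ) : ℝ) - 1) / 2)
      = L ^ k * (√L / 2) := by rw [hexp]; ring
    _ ≤ _ := pow_mul_sqrt_div_two_le_card_mul_sub k hL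
    _ ≤ _ := by
      exact_mod_cast hcount.trans
        (card_filter_separable_le_ncard_squareDiscPolys k (hk.trans hL))
end

section
/- Let n ≥ 2 be an integer, let S be a finite set of cardinality X ≥ 1, and let Y be an integer with 1 ≤ Y ≤ X. Set q = ⌊(X−1)/Y⌋. Then: (a) for every partition of S into nonempty parts S₁,…,S_k each of cardinality at most Y, one has Σ_{i=1}^k |S_i|^n ≤ q·Y^n + (X − qY)^n; and (b) this bound is attained by the partition consisting of q parts of size Y and one part of size X − qY (note 1 ≤ X − qY ≤ Y). In particular, the maximum of Σ_i |S_i|^n over all such partitions is at most X·Y^(n−1) + Y^n. -/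
private def bnd (n Y X : ℕ) : ℕ := (X - 1) / Y * Y ^ n + (X - (X - 1) / Y * Y) ^ n

private lemma step1 (n x y : ℕ) (h : x ≤ y) : (x + 1) ^ n + y ^ n ≤ x ^ n + (y + 1) ^ n := by
  have e : ∀ z : ℕ, (z + 1) ^ n = (∑ k ∈ Finset.range n, z ^ k * n.choose k) + z ^ n := by
    intro z
    rw [add_pow]
    simp [Finset.sum_range_succ]
  rw [e x, e y]
  have hs : (∑ k ∈ Finset.range n, x ^ k * n.choose k)
      ≤ ∑ k ∈ Finset.range n, y ^ k * n.choose k :=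
    Finset.sum_le_sum fun k _ => Nat.mul_le_mul_right _ (Nat.pow_le_pow_left h k)
  omega

private lemma spread (n : ℕ) : ∀ t x y : ℕ, x ≤ y → (x + t) ^ n + y ^ n ≤ x ^ n + (y + t) ^ n := by
  intro t
  induction t with
  | zero => intro x y _; simp
  | succ t ih =>
    intro x y h
    have h1 := ih x y h
    have h2 := step1 n (x + t) (y + t) (by omega)
    rw [show x + (t + 1) = x + t + 1 from rfl, show y + (t + 1) = y + t + 1 from rfl]
    omega

private lemma spread2 (n Y a b : ℕ) (ha : a ≤ Y) (hb : b ≤ Y) (hab : Y < a + b) :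
    a ^ n + b ^ n ≤ Y ^ n + (a + b - Y) ^ n := by
  rcases le_total a b with h | h
  · have h1 := spread n (Y - b) (a + b - Y) b (by omega)
    rw [show a + b - Y + (Y - b) = a by omega, show b + (Y - b) = Y by omega] at h1
    omega
  · have h1 := spread n (Y - a) (a + b - Y) a (by omega)
    rw [show a + b - Y + (Y - a) = b by omega, show a + (Y - a) = Y by omega] at h1
    omega

private lemma bnd_step (n Y X : ℕ) (hY : 1 ≤ Y) (h : Y + 1 ≤ X) :
    bnd n Y X = Y ^ n + bnd n Y (X - Y) := by
  unfold bnd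
  have h1 : (X - 1) / Y = (X - Y - 1) / Y + 1 := by
    rw [show X - 1 = (X - Y - 1) + Y by omega, Nat.add_div_right _ (by omega)]
  rw [h1]
  have e1 : ((X - Y - 1) / Y + 1) * Y ^ n = (X - Y - 1) / Y * Y ^ n + Y ^ n := by ring
  have e2 : X - ((X - Y - 1) / Y + 1) * Y = (X - Y) - (X - Y - 1) / Y * Y := by
    have : ((X - Y - 1) / Y + 1) * Y = (X - Y - 1) / Y * Y + Y := by ring
    omega
  rw [e1, e2]
  omega

private lemma key_list (n Y : ℕ) (hn : n ≠ 0) (hY : 1 ≤ Y) :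
    ∀ (c : ℕ) (l : List ℕ), l.length ≤ c → (∀ a ∈ l, 1 ≤ a ∧ a ≤ Y) →
    (l.map (· ^ n)).sum ≤ bnd n Y l.sum := by
  intro c
  induction c with
  | zero =>
    intro l hl _
    have : l = [] := List.length_eq_zero_iff.mp (Nat.le_zero.mp hl)
    subst this
    simp [bnd, zero_pow hn]
  | succ c ih =>
    intro l hl hmem
    rcases l with _ | ⟨a, _ | ⟨b, rest⟩⟩
    · simp [bnd, zero_pow hn]
    · obtain ⟨ha1, haY⟩ := hmem a (by simp)
      have hq0 : (a - 1) / Y = 0 := Nat.div_eq_of_lt (by omega)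
      simp [bnd, hq0]
    · obtain ⟨ha1, haY⟩ := hmem a (by simp)
      obtain ⟨hb1, hbY⟩ := hmem b (by simp)
      by_cases hab : a + b ≤ Y
      · have h2 : a ^ n + b ^ n ≤ (a + b) ^ n :=
          pow_add_pow_le (Nat.zero_le a) (Nat.zero_le b) hn
        have h1 := ih ((a + b) :: rest) (by simp at hl ⊢; omega)
          (by
            intro x hx
            rcases List.mem_cons.mp hx with h | h
            · subst h; exact ⟨by omega, hab⟩
            · exact hmem x (by simp [h]))
        have hs : ((a + b) :: rest).sum = (a :: b :: rest).sum := by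
          simp [List.sum_cons]; omega
        rw [hs] at h1
        simp only [List.map_cons, List.sum_cons] at h1 ⊢
        omega
      · have h2 : a ^ n + b ^ n ≤ Y ^ n + (a + b - Y) ^ n :=
          spread2 n Y a b haY hbY (by omega)
        have h1 := ih ((a + b - Y) :: rest) (by simp at hl ⊢; omega)
          (by
            intro x hx
            rcases List.mem_cons.mp hx with h | h
            · subst h; exact ⟨by omega, by omega⟩
            · exact hmem x (by simp [h]))
        have hs : ((a + b - Y) :: rest).sum = (a :: b :: rest).sum - Y := by
          simp [List.sum_cons]; omega
        rw [hs] at h1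
        rw [show (a :: b :: rest).sum = a + (b + rest.sum) from rfl] at *
        rw [bnd_step n Y _ hY (by omega)]
        simp only [List.map_cons, List.sum_cons] at h1 ⊢
        omega

private lemma key_finset {ι : Type*} (n Y : ℕ) (hn : n ≠ 0) (hY : 1 ≤ Y) (s : Finset ι)
    (f : ι → ℕ) (h : ∀ i ∈ s, 1 ≤ f i ∧ f i ≤ Y) :
    ∑ i ∈ s, f i ^ n ≤ bnd n Y (∑ i ∈ s, f i) := by
  obtain ⟨l, hl⟩ : ∃ l : List ι, s.val = ↑l := ⟨s.val.toList, (Multiset.coe_toList _).symm⟩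
  have hsum : ∑ i ∈ s, f i = (l.map f).sum := by
    rw [Finset.sum, hl]; simp
  have hpow : ∑ i ∈ s, f i ^ n = ((l.map f).map (· ^ n)).sum := by
    rw [Finset.sum, hl]; simp [List.map_map]; rfl
  rw [hsum, hpow]
  refine key_list n Y hn hY (l.map f).length _ le_rfl ?_
  intro a ha
  obtain ⟨i, hi, rfl⟩ := List.mem_map.mp ha
  exact h i (by rw [← Finset.mem_val, hl]; exact Multiset.mem_coe.mpr hi)

theorem partition_power_sum_bound {α : Type*} [DecidableEq α]
    (n : ℕ) (hn : 2 ≤ n) (S : Finset α) (X Y : ℕ) (hX : X = S.card) (hX1 : 1 ≤ X)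
    (hY1 : 1 ≤ Y) (hYX : Y ≤ X) (q : ℕ) (hq : q = (X - 1) / Y) :
    -- (a) every partition of `S` into nonempty parts of size at most `Y`
    -- has power sum at most `q * Y ^ n + (X - q * Y) ^ n`
    (∀ (k : ℕ) (Si : Fin k → Finset α),
        (∀ i, Si i ≠ ∅) → (∀ i, (Si i).card ≤ Y) →
        (∀ i j, i ≠ j → Disjoint (Si i) (Si j)) →
        Finset.univ.biUnion Si = S →
        ∑ i, (Si i).card ^ n ≤ q * Y ^ n + (X - q * Y) ^ n) ∧
    -- (b) the bound is attained: by a partition with `q` parts of size `Y`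
    -- and one part of size `X - q * Y`
    (∃ (k : ℕ) (Si : Fin k → Finset α),
        (∀ i, Si i ≠ ∅) ∧ (∀ i, (Si i).card ≤ Y) ∧
        (∀ i j, i ≠ j → Disjoint (Si i) (Si j)) ∧
        Finset.univ.biUnion Si = S ∧
        k = q + 1 ∧
        (∀ i : Fin k, (i : ℕ) < q → (Si i).card = Y) ∧
        (∀ i : Fin k, (i : ℕ) = q → (Si i).card = X - q * Y) ∧
        ∑ i, (Si i).card ^ n = q * Y ^ n + (X - q * Y) ^ n) ∧
    -- the remaining part has size between `1` and `Y`
    (1 ≤ X - q * Y ∧ X - q * Y ≤ Y) ∧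
    -- in particular the maximum is at most `X * Y ^ (n - 1) + Y ^ n`
    q * Y ^ n + (X - q * Y) ^ n ≤ X * Y ^ (n - 1) + Y ^ n := by
  subst hX
  have hY0 : 0 < Y := hY1
  have h1 : q * Y ≤ S.card - 1 := by
    rw [hq]; exact Nat.div_mul_le_self _ _
  have h2 : S.card ≤ q * Y + Y := by
    have h3 : S.card - 1 < (q + 1) * Y := by
      rw [hq]; exact (Nat.div_lt_iff_lt_mul hY0).mp (Nat.lt_succ_self _)
    have h4 : (q + 1) * Y = q * Y + Y := by ring
    omega
  refine ⟨?_, ?_, ⟨by omega, by omega⟩, ?_⟩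
  · -- part (a)
    intro k Si hne hle hdisj hU
    have hcard : ∑ i, (Si i).card = S.card := by
      rw [← hU]
      exact (Finset.card_biUnion (fun i _ j _ hij => hdisj i j hij)).symm
    have hkey := key_finset n Y (by omega) hY1 Finset.univ (fun i => (Si i).card)
      (fun i _ => ⟨Finset.card_pos.mpr (Finset.nonempty_iff_ne_empty.mpr (hne i)), hle i⟩)
    rw [hcard] at hkey
    unfold bnd at hkey
    rw [hq]
    exact hkey
  · -- part (b): explicit construction
    classical
    set e := S.equivFin with he
    set g : Fin S.card → α := fun j => ((e.symm j : S) : α) with hg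
    have hginj : Function.Injective g := fun u v huv => e.symm.injective (Subtype.ext huv)
    have hgmem : ∀ j, g j ∈ S := fun j => (e.symm j).2
    have hBlt : ∀ i : Fin (q + 1), ∀ m ∈ Finset.Ico ((i : ℕ) * Y)
        (min (((i : ℕ) + 1) * Y) S.card), m < S.card := by
      intro i m hm
      rw [Finset.mem_Ico] at hm
      omega
    set Si : Fin (q + 1) → Finset α := fun i =>
      (Finset.attachFin (Finset.Ico ((i : ℕ) * Y) (min (((i : ℕ) + 1) * Y) S.card))
        (hBlt i)).image g with hSi
    have hcards : ∀ i : Fin (q + 1),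
        (Si i).card = min (((i : ℕ) + 1) * Y) S.card - (i : ℕ) * Y := by
      intro i
      rw [hSi]
      rw [Finset.card_image_of_injective _ hginj, Finset.card_attachFin, Nat.card_Ico]
    have hcard_lt : ∀ i : Fin (q + 1), (i : ℕ) < q → (Si i).card = Y := by
      intro i h
      have e1 : ((i : ℕ) + 1) * Y ≤ q * Y := Nat.mul_le_mul_right _ (by omega)
      have e2 : ((i : ℕ) + 1) * Y = (i : ℕ) * Y + Y := by ring
      rw [hcards i, min_eq_left (by omega)]
      omega
    have hcard_q : ∀ i : Fin (q + 1), (i : ℕ) = q → (Si i).card = S.card - q * Y := by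
      intro i h
      have e2 : (q + 1) * Y = q * Y + Y := by ring
      rw [hcards i, h, min_eq_right (by omega)]
    have hcard_all : ∀ i : Fin (q + 1), 1 ≤ (Si i).card ∧ (Si i).card ≤ Y := by
      intro i
      have hi : (i : ℕ) < q + 1 := i.isLt
      rcases Nat.lt_or_ge (i : ℕ) q with h | h
      · rw [hcard_lt i h]; omega
      · have : (i : ℕ) = q := by omega
        rw [hcard_q i this]; omega
    have hdisj : ∀ i j : Fin (q + 1), i ≠ j → Disjoint (Si i) (Si j) := by
      intro i j hij
      rw [Finset.disjoint_left]
      intro x hxi hxj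
      rw [hSi] at hxi hxj
      obtain ⟨u, hu, hux⟩ := Finset.mem_image.mp hxi
      obtain ⟨v, hv, hvx⟩ := Finset.mem_image.mp hxj
      have huv : u = v := hginj (by rw [hux, hvx])
      subst huv
      rw [Finset.mem_attachFin, Finset.mem_Ico] at hu hv
      have hij' : (i : ℕ) ≠ (j : ℕ) := fun h => hij (Fin.ext h)
      rcases lt_or_gt_of_ne hij' with h | h
      · have := Nat.mul_le_mul_right Y (show (i : ℕ) + 1 ≤ (j : ℕ) by omega)
        omega
      · have := Nat.mul_le_mul_right Y (show (j : ℕ) + 1 ≤ (i : ℕ) by omega)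
        omega
    have hsum : ∑ i, (Si i).card = S.card := by
      rw [Fin.sum_univ_castSucc]
      rw [Finset.sum_congr rfl (fun i _ => hcard_lt i.castSucc (by simpa using i.isLt))]
      rw [hcard_q (Fin.last q) (by simp [Fin.last])]
      simp only [Finset.sum_const, Finset.card_univ, Fintype.card_fin, smul_eq_mul]
      omega
    have hU : Finset.univ.biUnion Si = S := by
      refine Finset.eq_of_subset_of_card_le ?_ ?_
      · intro x hx
        obtain ⟨i, _, hxi⟩ := Finset.mem_biUnion.mp hx
        rw [hSi] at hxi
        obtain ⟨u, _, rfl⟩ := Finset.mem_image.mp hxi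
        exact hgmem u
      · rw [Finset.card_biUnion (fun i _ j _ hij => hdisj i j hij), hsum]
    have hpow : ∑ i, (Si i).card ^ n = q * Y ^ n + (S.card - q * Y) ^ n := by
      rw [Fin.sum_univ_castSucc]
      rw [Finset.sum_congr rfl (fun i _ => by
        rw [hcard_lt i.castSucc (by simpa using i.isLt)])]
      rw [hcard_q (Fin.last q) (by simp [Fin.last])]
      simp only [Finset.sum_const, Finset.card_univ, Fintype.card_fin, smul_eq_mul]
    refine ⟨q + 1, Si, ?_, fun i => (hcard_all i).2, hdisj, hU, rfl, hcard_lt, hcard_q, hpow⟩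
    intro i
    have := (hcard_all i).1
    intro hemp
    rw [hemp] at this
    simp at this
  · -- part (d)
    have e1 : Y ^ n = Y ^ (n - 1) * Y := by
      rw [← pow_succ]
      congr 1
      omega
    have e2 : q * Y ^ n = (q * Y) * Y ^ (n - 1) := by rw [e1]; ring
    have e3 : (S.card - q * Y) ^ n ≤ Y ^ n := Nat.pow_le_pow_left (by omega) n
    have e4 : (q * Y) * Y ^ (n - 1) ≤ S.card * Y ^ (n - 1) :=
      Nat.mul_le_mul_right _ (by omega)
    omega
end

section
/- Let n ≥ 2 be an integer, let S be a finite set of cardinality X, and let S = ⋃_{i ∈ I} S_i be a cover of S by finitely many subsets, indexed by a finite set I, such that |S_i| ≤ Y for every i and |S_i ∩ ⋃_{j ≠ i} S_j| ≤ R for every i, where Y ≥ 1 and R ≥ 0 are integers. Then Σ_{i ∈ I} (max(|S_i| − R, 0))^n ≤ X·Y^(n−1). -/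
theorem cover_power_sum_bound {α : Type*} [DecidableEq α]
    {ι : Type*} [Fintype ι] [DecidableEq ι]
    (n : ℕ) (hn : 2 ≤ n) (S : Finset α) (X Y R : ℕ) (hX : X = S.card) (hY1 : 1 ≤ Y)
    (Si : ι → Finset α)
    (hcover : Finset.univ.biUnion Si = S)
    (hsize : ∀ i, (Si i).card ≤ Y)
    (hoverlap : ∀ i, (Si i ∩ (Finset.univ.erase i).biUnion Si).card ≤ R) :
    ∑ i, ((Si i).card - R) ^ n ≤ X * Y ^ (n - 1) := by
  classical
  set T : ι → Finset α := fun i => Si i \ (Finset.univ.erase i).biUnion Si with hT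
  have hTcard : ∀ i, (Si i).card - R ≤ (T i).card := by
    intro i
    have h := Finset.card_inter_add_card_sdiff (Si i) ((Finset.univ.erase i).biUnion Si)
    have h2 : (T i).card = (Si i).card - (Si i ∩ (Finset.univ.erase i).biUnion Si).card := by
      simp only [hT]; omega
    rw [h2]
    exact Nat.sub_le_sub_left (hoverlap i) _
  have hdisj : ∀ i ∈ Finset.univ, ∀ j ∈ Finset.univ, i ≠ j → Disjoint (T i) (T j) := by
    intro i _ j _ hij
    rw [Finset.disjoint_left]
    intro a ha hb
    have ha' := Finset.mem_sdiff.mp ha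
    have hb' := Finset.mem_sdiff.mp hb
    exact ha'.2 (Finset.mem_biUnion.mpr
      ⟨j, Finset.mem_erase.mpr ⟨hij.symm, Finset.mem_univ j⟩, hb'.1⟩)
  have hsum : ∑ i, (T i).card ≤ X := by
    rw [← Finset.card_biUnion hdisj, hX]
    apply Finset.card_le_card
    intro a ha
    obtain ⟨i, _, hi⟩ := Finset.mem_biUnion.mp ha
    rw [← hcover]
    exact Finset.mem_biUnion.mpr ⟨i, Finset.mem_univ i, (Finset.mem_sdiff.mp hi).1⟩
  calc ∑ i, ((Si i).card - R) ^ n ≤ ∑ i, (T i).card * Y ^ (n - 1) := by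
        apply Finset.sum_le_sum
        intro i _
        have h1 : ((Si i).card - R) ^ n = ((Si i).card - R) * ((Si i).card - R) ^ (n - 1) := by
          conv_lhs => rw [show n = 1 + (n - 1) by omega, pow_add, pow_one]
        rw [h1]
        exact Nat.mul_le_mul (hTcard i)
          (Nat.pow_le_pow_left (le_trans (Nat.sub_le _ _) (hsize i)) _)
    _ = (∑ i, (T i).card) * Y ^ (n - 1) := (Finset.sum_mul ..).symm
    _ ≤ X * Y ^ (n - 1) := Nat.mul_le_mul_right _ hsum
end

section
/- Let K be a field, let E/K be a finite separable field extension of degree n1 ≥ 2, let n2 ≥ 1, and let b₀,…,b_{n2−1} ∈ E be elements with E = K(b₀,…,b_{n2−1}). Let g = X^{n2} + b_{n2−1}X^{n2−1} + ⋯ + b₁X + b₀ ∈ E[X], and let c be the number of proper intermediate fields K ⊆ F ⊊ E (this number is finite since E/K is finite and separable). Then for every finite subset S ⊆ K with |S| ≥ n2·c + 1 there exists s ∈ S such that K(g(s)) = E. -/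
open Polynomial

private lemma key_coeff_mem {K E : Type*} [Field K] [Field E] [Algebra K E]
    (n2 : ℕ) (b : Fin n2 → E)
    (g : E[X]) (hg : g = X ^ n2 + ∑ i : Fin n2, C (b i) * X ^ (i : ℕ))
    (F : IntermediateField K E) (t : Fin (n2 + 1) → K) (ht : Function.Injective t)
    (hmem : ∀ j, g.eval (algebraMap K E (t j)) ∈ F) : ∀ i, b i ∈ F := by
  set b' : Fin (n2 + 1) → E := Fin.snoc b 1 with hb'
  have heval : ∀ x : E, g.eval x = ∑ i : Fin (n2 + 1), b' i * x ^ (i : ℕ) := by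
    intro x
    rw [hg]
    simp only [eval_add, eval_pow, eval_X, eval_finset_sum, eval_mul, eval_C]
    rw [Fin.sum_univ_castSucc]
    simp only [hb', Fin.snoc_castSucc, Fin.snoc_last, Fin.coe_castSucc, Fin.val_last, one_mul]
    ring
  set V : Matrix (Fin (n2 + 1)) (Fin (n2 + 1)) K := Matrix.vandermonde t with hV
  have hdet : IsUnit V.det := by
    rw [hV, Matrix.det_vandermonde]
    refine (Finset.prod_ne_zero_iff.2 fun i _ => Finset.prod_ne_zero_iff.2
      fun j hj => sub_ne_zero.2 fun h => ?_).isUnit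
    exact absurd (ht h).symm (Finset.mem_Ioi.1 hj).ne
  have hinv : V⁻¹ * V = 1 := Matrix.nonsing_inv_mul V hdet
  have hb'mem : ∀ i, b' i ∈ F := by
    intro i
    have hrow : ∀ j, (∑ k, algebraMap K E (V j k) * b' k) = g.eval (algebraMap K E (t j)) := by
      intro j
      rw [heval]
      refine Finset.sum_congr rfl fun k _ => ?_
      rw [hV, Matrix.vandermonde_apply, map_pow, mul_comm]
    have hcalc : b' i = ∑ j, algebraMap K E (V⁻¹ i j) * (∑ k, algebraMap K E (V j k) * b' k) := by
      have : ∑ j, algebraMap K E (V⁻¹ i j) * (∑ k, algebraMap K E (V j k) * b' k)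
          = ∑ k, algebraMap K E ((V⁻¹ * V) i k) * b' k := by
        calc ∑ j, algebraMap K E (V⁻¹ i j) * (∑ k, algebraMap K E (V j k) * b' k)
            = ∑ j, ∑ k, algebraMap K E (V⁻¹ i j) * (algebraMap K E (V j k) * b' k) := by
              simp [Finset.mul_sum]
          _ = ∑ k, ∑ j, algebraMap K E (V⁻¹ i j) * (algebraMap K E (V j k) * b' k) :=
              Finset.sum_comm
          _ = ∑ k, algebraMap K E ((V⁻¹ * V) i k) * b' k := by
              refine Finset.sum_congr rfl fun k _ => ?_
              rw [Matrix.mul_apply, map_sum, Finset.sum_mul]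
              refine Finset.sum_congr rfl fun j _ => ?_
              rw [map_mul]; ring
      rw [this, hinv]
      rw [Fintype.sum_eq_single i fun k hk => by
        simp [Matrix.one_apply, Ne.symm hk]]
      simp [Matrix.one_apply]
    rw [hcalc]
    exact sum_mem fun j _ => F.mul_mem (F.algebraMap_mem _)
      (by rw [hrow]; exact hmem j)
  intro i
  have := hb'mem (Fin.castSucc i)
  rwa [hb', Fin.snoc_castSucc] at this

theorem exists_eval_generator {K E : Type*} [Field K] [Field E] [Algebra K E]
    [FiniteDimensional K E] [Algebra.IsSeparable K E]
    (n1 n2 : ℕ) (h1 : 2 ≤ n1) (h2 : 1 ≤ n2) (hrank : Module.finrank K E = n1)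
    (b : Fin n2 → E)
    (hgen : IntermediateField.adjoin K (Set.range b) = ⊤)
    (g : E[X]) (hg : g = X ^ n2 + ∑ i : Fin n2, C (b i) * X ^ (i : ℕ))
    (c : ℕ) (hc : c = Nat.card {F : IntermediateField K E // F ≠ ⊤}) :
    ∀ S : Finset K, n2 * c + 1 ≤ S.card →
      ∃ s ∈ S, IntermediateField.adjoin K {g.eval (algebraMap K E s)} = ⊤ := by
  have hfin : Finite (IntermediateField K E) :=
    Field.finite_intermediateField_of_exists_primitive_element K E
      (Field.exists_primitive_element K E)
  have : Fintype (IntermediateField K E) := Fintype.ofFinite _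
  classical
  intro S hS
  by_contra hcon
  push_neg at hcon
  -- consider the map s ↦ adjoin K {g.eval s}, landing in proper fields
  set f : K → IntermediateField K E :=
    fun s => IntermediateField.adjoin K {g.eval (algebraMap K E s)} with hf
  set T : Finset (IntermediateField K E) := Finset.univ.filter (· ≠ ⊤) with hT
  have hmaps : ∀ s ∈ S, f s ∈ T := fun s hs => by
    simp [hT, hf, hcon s hs]
  have hcard : c = T.card := by
    rw [hc, Nat.card_eq_fintype_card, Fintype.card_subtype]
  have hlt : T.card * n2 < S.card := by
    rw [← hcard]
    calc c * n2 = n2 * c := mul_comm _ _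
    _ < n2 * c + 1 := Nat.lt_succ_self _
    _ ≤ S.card := hS
  obtain ⟨F, hFT, hFcard⟩ := Finset.exists_lt_card_fiber_of_mul_lt_card_of_maps_to hmaps hlt
  have hFne : F ≠ ⊤ := (Finset.mem_filter.1 hFT).2
  -- extract n2+1 distinct elements whose images lie in F
  obtain ⟨u, hu_sub, hu_card⟩ :=
    Finset.exists_subset_card_eq (show n2 + 1 ≤ (S.filter fun s => f s = F).card from hFcard)
  set e : Fin (n2 + 1) ≃ u := (u.equivFinOfCardEq hu_card).symm with he
  have ht : Function.Injective (fun j => ((e j : K))) := by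
    intro a b hab
    exact e.injective (Subtype.ext hab)
  have hmem : ∀ j, g.eval (algebraMap K E ((e j : K))) ∈ F := by
    intro j
    have hju : ((e j : K)) ∈ u := (e j).2
    have := hu_sub hju
    have hadj : f ((e j : K)) = F := (Finset.mem_filter.1 this).2
    rw [← hadj]
    exact IntermediateField.subset_adjoin K _ rfl
  have hb : ∀ i, b i ∈ F := key_coeff_mem n2 b g hg F _ ht hmem
  have htop : (⊤ : IntermediateField K E) ≤ F := by
    rw [← hgen]
    exact IntermediateField.adjoin_le_iff.2 (Set.range_subset_iff.2 hb)
  exact hFne (top_le_iff.1 htop)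
end

section
/- Let n1, n2 ≥ 1. There exists a constant C > 0 depending only on n1 and n2 with the following property. Let E ⊆ ℂ be a subfield with [E:ℚ] = n1, let b₀,…,b_{n2−1} ∈ E be elements that generate E over ℚ, let g = X^{n2} + Σ_{i<n2} b_i X^i ∈ E[X], and let f = ∏_{σ : E →+* ℂ} σg ∈ ℂ[X], where σg is obtained by applying the embedding σ to each coefficient of g. Then for every i ∈ {0,…,n2−1}, P_E(b_i) ≤ C · max_j |coeff_j(f)|. -/
open Polynomial

/-- For a subfield `E ⊆ ℂ` of finite degree `d` over `ℚ` and `b ∈ E`,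
`PE E b = ∏_{σ : E →+* ℂ} max 1 |σ b|` is the `d`-th power of the absolute
multiplicative Weil height of `b`. -/
noncomputable def PE (E : IntermediateField ℚ ℂ) (b : E) : ℝ :=
  ∏ᶠ σ : (E →+* ℂ), max 1 (‖σ b‖)

/-!
`P_E(bᵢ)` and the height of `f` are both compared with the Mahler measure `M`. For each embedding `σ`, the
coefficient `σ bᵢ` of the monic polynomial `σg` of degree `n₂` has norm at most
`2 ^ n₂ * M(σg)`, and `1 ≤ M(σg)`; multiplying over the `n₁` embeddings gives
`P_E(bᵢ) ≤ 2 ^ (n₁ n₂) * M(f)` since `M` is multiplicative. Landau's inequality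
`M(f) ≤ √(deg f + 1) * H(f)` finishes the argument.
-/

namespace Polynomial

theorem Monic.max_one_norm_coeff_le_two_pow_mul_mahlerMeasure {p : ℂ[X]} (hp : p.Monic)
    (n : ℕ) : max 1 ‖p.coeff n‖ ≤ 2 ^ p.natDegree * p.mahlerMeasure := by
  have h_one_le : 1 ≤ p.mahlerMeasure :=
    one_le_mahlerMeasure_of_one_le_norm_leadingCoeff (by simp [hp.leadingCoeff])
  have h_choose : (p.natDegree.choose n : ℝ) ≤ 2 ^ p.natDegree := by
    exact_mod_cast Nat.choose_le_two_pow _ _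
  refine max_le ?_ ?_
  · exact h_one_le.trans (le_mul_of_one_le_left (by positivity) (one_le_pow₀ one_le_two))
  · exact (norm_coeff_le_choose_mul_mahlerMeasure n p).trans
      (mul_le_mul_of_nonneg_right h_choose p.mahlerMeasure_nonneg)

theorem mahlerMeasure_prod {ι : Type*} (s : Finset ι) (p : ι → ℂ[X]) :
    (∏ i ∈ s, p i).mahlerMeasure = ∏ i ∈ s, (p i).mahlerMeasure := by
  simpa using prod_mahlerMeasure_eq_mahlerMeasure_prod (s.val.map p)

variable {ι K : Type*} [Fintype ι] [Semiring K]

theorem prod_max_one_norm_coeff_le_mahlerMeasure_prod_map (σ : ι → K →+* ℂ) {g : K[X]}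
    (hg : g.Monic) (n : ℕ) :
    ∏ i, max 1 ‖σ i (g.coeff n)‖ ≤
      2 ^ (Fintype.card ι * g.natDegree) * (∏ i, g.map (σ i)).mahlerMeasure := by
  rw [mahlerMeasure_prod, pow_mul', ← Finset.card_univ, ← Finset.prod_const,
    ← Finset.prod_mul_distrib]
  refine Finset.prod_le_prod (fun _ _ => zero_le_one.trans (le_max_left _ _)) fun i _ => ?_
  have h := (hg.map (σ i)).max_one_norm_coeff_le_two_pow_mul_mahlerMeasure n
  rwa [coeff_map, hg.natDegree_map] at h

theorem natDegree_prod_map_of_monic (σ : ι → K →+* ℂ) {g : K[X]} (hg : g.Monic) :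
    (∏ i, g.map (σ i)).natDegree = Fintype.card ι * g.natDegree := by
  rw [natDegree_prod_of_monic _ _ fun i _ => hg.map (σ i)]
  simp [hg.natDegree_map]

theorem prod_max_one_norm_coeff_le_supNorm_prod_map (σ : ι → K →+* ℂ) {g : K[X]}
    (hg : g.Monic) (n : ℕ) :
    ∏ i, max 1 ‖σ i (g.coeff n)‖ ≤
      2 ^ (Fintype.card ι * g.natDegree) * √(Fintype.card ι * g.natDegree + 1) *
        (∏ i, g.map (σ i)).supNorm := by
  have h_landau := mahlerMeasure_le_sqrt_natDegree_add_one_mul_supNorm (∏ i, g.map (σ i))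
  rw [natDegree_prod_map_of_monic σ hg, Nat.cast_mul] at h_landau
  rw [mul_assoc]
  exact (prod_max_one_norm_coeff_le_mahlerMeasure_prod_map σ hg n).trans
    (mul_le_mul_of_nonneg_left h_landau (by positivity))

section FinSum

variable {R : Type*} [Semiring R] {n : ℕ} (b : Fin n → R)

theorem monic_X_pow_add_sum_fin : (X ^ n + ∑ i : Fin n, C (b i) * X ^ (i : ℕ)).Monic :=
  monic_X_pow_add (degree_sum_fin_lt b)

theorem natDegree_X_pow_add_sum_fin [Nontrivial R] :
    (X ^ n + ∑ i : Fin n, C (b i) * X ^ (i : ℕ)).natDegree = n := by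
  rw [natDegree_add_eq_left_of_degree_lt, natDegree_X_pow]
  simpa only [degree_X_pow] using degree_sum_fin_lt b

theorem coeff_X_pow_add_sum_fin (i : Fin n) :
    (X ^ n + ∑ i : Fin n, C (b i) * X ^ (i : ℕ)).coeff i = b i := by
  simp [coeff_X_pow, finsetSum_coeff, i.is_lt.ne, Fin.val_inj]

end FinSum

end Polynomial

theorem coefficient_height_bound_general (n1 n2 : ℕ) :
    ∃ c > (0 : ℝ),
      ∀ (E : IntermediateField ℚ ℂ), FiniteDimensional ℚ E →
        Module.finrank ℚ E = n1 →
        ∀ b : Fin n2 → E,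
          IntermediateField.adjoin ℚ (Set.range fun i => (b i : ℂ)) = E →
          ∀ g : Polynomial E, g = X ^ n2 + ∑ i : Fin n2, C (b i) * X ^ (i : ℕ) →
          ∀ f : Polynomial ℂ, f = ∏ᶠ σ : (E →+* ℂ), g.map (σ : E →+* ℂ) →
          ∀ i : Fin n2, PE E (b i) ≤ c * ⨆ j : ℕ, ‖f.coeff j‖ := by
  refine ⟨2 ^ (n1 * n2) * √(n1 * n2 + 1), by positivity, ?_⟩
  rintro E hfd hrank b - g rfl f rfl i
  have : NumberField E := ⟨⟩
  have h_card : Fintype.card (E →+* ℂ) = n1 := by rw [NumberField.Embeddings.card, hrank]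
  have h := prod_max_one_norm_coeff_le_supNorm_prod_map (fun σ : E →+* ℂ => σ)
    (monic_X_pow_add_sum_fin b) i
  rw [h_card, natDegree_X_pow_add_sum_fin, coeff_X_pow_add_sum_fin, supNorm_eq_iSup] at h
  rw [PE, finprod_eq_prod_of_fintype, finprod_eq_prod_of_fintype]
  exact_mod_cast h

theorem coefficient_height_bound (n1 n2 : ℕ) (h1 : 1 ≤ n1) (h2 : 1 ≤ n2) :
    ∃ c > (0 : ℝ),
      ∀ (E : IntermediateField ℚ ℂ), FiniteDimensional ℚ E →
        Module.finrank ℚ E = n1 →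
        ∀ b : Fin n2 → E,
          IntermediateField.adjoin ℚ (Set.range fun i => (b i : ℂ)) = E →
          ∀ g : Polynomial E, g = X ^ n2 + ∑ i : Fin n2, C (b i) * X ^ (i : ℕ) →
          ∀ f : Polynomial ℂ, f = ∏ᶠ σ : (E →+* ℂ), g.map (σ : E →+* ℂ) →
          ∀ i : Fin n2, PE E (b i) ≤ c * ⨆ j : ℕ, ‖f.coeff j‖ :=
  coefficient_height_bound_general n1 n2
end
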